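/- Let X be a finite simple graph on n vertices with at least one edge, with minimal degree δ, maximal degree Δ, and largest Laplacian eigenvalue λ_max, and let α' be the independence number of the derived graph X'. Then the real function b(λ) = n(1 − Δ/λ) + α'(Δ − δ)/(λ − δ) is strictly increasing on the interval [λ_max, ∞). -/

import Mathlib

open Finset

/-- The independence number: the largest size of a set of pairwise non-adjacent vertices. -/
noncomputable def indepNum {V : Type*} (G : SimpleGraph V) : ℕ :=
  sSup {n | ∃ s : Finset V, (∀ v ∈ s, ∀ w ∈ s, ¬ G.Adj v w) ∧ s.card = n}

/-- The degree of a vertex: the number of its neighbours. -/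
noncomputable def deg {V : Type*} (G : SimpleGraph V) (v : V) : ℕ :=
  (G.neighborSet v).ncard

/-- The minimal degree. -/
noncomputable def minDeg {V : Type*} (G : SimpleGraph V) : ℕ :=
  sInf (Set.range (deg G))

/-- The maximal degree. -/
noncomputable def maxDeg {V : Type*} (G : SimpleGraph V) : ℕ :=
  sSup (Set.range (deg G))

/-- The largest eigenvalue of the Laplacian matrix `L = D - A`. -/
noncomputable def lapMax {V : Type*} [Fintype V] (G : SimpleGraph V) : ℝ :=
  letI := Classical.decEq V
  letI := Classical.decRel G.Adj
  ⨆ i, (SimpleGraph.posSemidef_lapMatrix ℝ G).1.eigenvalues i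

/-- The derived graph: the induced subgraph on the vertices of non-maximal degree. -/
noncomputable def derived {V : Type*} (G : SimpleGraph V) :
    SimpleGraph {v : V | deg G v < maxDeg G} :=
  G.induce {v : V | deg G v < maxDeg G}

/-!
Write `μ = λ_max` and `α = α'`. For `μ ≤ x < y`, the sign of `b(y) - b(x)` is that of
`nΔ(x - δ)(y - δ) - α(Δ - δ)xy = ((n - α)y - nδ)·Δ(x - δ) + αyδ(x - Δ)`. As `μ ≥ Δ`, both
summands are nonnegative by the Laplacian ratio bound `δn ≤ μ(n - α)`, and the first one is positive
because `α < n` (a vertex of maximal degree is not in the derived graph). The ratio bound is the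
Rayleigh quotient of the centred indicator vector of an independent set `S` of size `α`: its
Laplacian quadratic form counts the edges leaving `S`, which are at least `δα`.
-/

open Matrix

theorem Matrix.IsHermitian.dotProduct_mulVec_le_of_eigenvalues_le {n : Type*} [Fintype n]
    [DecidableEq n] {A : Matrix n n ℝ} (hA : A.IsHermitian) {c : ℝ} (hc : ∀ i, hA.eigenvalues i ≤ c)
    (x : n → ℝ) : x ⬝ᵥ (A *ᵥ x) ≤ c * (x ⬝ᵥ x) := by
  set U : Matrix n n ℝ := (hA.eigenvectorUnitary : Matrix n n ℝ)
  set y : n → ℝ := Uᵀ *ᵥ x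
  have hUUt : U * Uᵀ = 1 := by
    simpa [star_eq_conjTranspose] using Unitary.mul_star_self_of_mem hA.eigenvectorUnitary.2
  have hyy : y ⬝ᵥ y = x ⬝ᵥ x := by
    rw [dotProduct_mulVec, vecMul_transpose, mulVec_mulVec, hUUt, one_mulVec]
  have hxAx : x ⬝ᵥ (A *ᵥ x) = ∑ i, hA.eigenvalues i * (y i * y i) := by
    have hxU : x ᵥ* U = y := (mulVec_transpose U x).symm
    conv_lhs => rw [hA.spectral_theorem, Unitary.conjStarAlgAut_apply]
    rw [star_eq_conjTranspose, conjTranspose_eq_transpose_of_trivial, ← mulVec_mulVec,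
      dotProduct_mulVec, ← vecMul_vecMul, hxU]
    simp only [dotProduct, vecMul_diagonal, Function.comp_apply, RCLike.ofReal_real_eq_id, id]
    exact Finset.sum_congr rfl fun i _ => by ring
  rw [hxAx, ← hyy, dotProduct, Finset.mul_sum]
  gcongr with i
  · exact mul_self_nonneg _
  · exact hc i

section Degrees

variable {V : Type*} (G : SimpleGraph V)

theorem deg_eq_degree [Fintype V] [DecidableRel G.Adj] (v : V) : deg G v = G.degree v := by
  rw [deg, SimpleGraph.degree, SimpleGraph.neighborFinset_def, Set.ncard_eq_toFinset_card']

theorem minDeg_le_deg (v : V) : minDeg G ≤ deg G v := Nat.sInf_le ⟨v, rfl⟩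

theorem deg_le_maxDeg [Finite V] (v : V) : deg G v ≤ maxDeg G :=
  le_csSup (Set.finite_range _).bddAbove ⟨v, rfl⟩

theorem exists_deg_eq_maxDeg [Finite V] [Nonempty V] : ∃ v, deg G v = maxDeg G :=
  Nat.sSup_mem (Set.range_nonempty _) (Set.finite_range _).bddAbove

theorem minDeg_le_maxDeg [Finite V] [Nonempty V] : minDeg G ≤ maxDeg G :=
  (minDeg_le_deg G (Classical.arbitrary V)).trans (deg_le_maxDeg G _)

theorem deg_pos_of_adj [Finite V] {v w : V} (h : G.Adj v w) : 0 < deg G v :=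
  (Set.ncard_pos (Set.toFinite _)).2 ⟨w, h⟩

end Degrees

section Laplacian

variable {V : Type*} [Fintype V] (G : SimpleGraph V)

theorem dotProduct_lapMatrix_mulVec_le_lapMax_mul [DecidableEq V] [DecidableRel G.Adj] (x : V → ℝ) :
    x ⬝ᵥ (G.lapMatrix ℝ *ᵥ x) ≤ lapMax G * (x ⬝ᵥ x) := by
  unfold lapMax
  convert (G.isHermitian_lapMatrix ℝ).dotProduct_mulVec_le_of_eigenvalues_le
    (fun i => le_ciSup (Set.finite_range _).bddAbove i) x <;> rfl

theorem maxDeg_le_lapMax [Nonempty V] : (maxDeg G : ℝ) ≤ lapMax G := by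
  classical
  obtain ⟨v, hv⟩ := exists_deg_eq_maxDeg G
  have := dotProduct_lapMatrix_mulVec_le_lapMax_mul G (Pi.single v 1)
  simpa [SimpleGraph.lapMatrix, SimpleGraph.degMatrix, ← hv, deg_eq_degree] using this

theorem dotProduct_lapMatrix_mulVec_smul_add_const [DecidableEq V] [DecidableRel G.Adj]
    (x : V → ℝ) (a c : ℝ) :
    (a • x + fun _ => c) ⬝ᵥ (G.lapMatrix ℝ *ᵥ (a • x + fun _ => c)) =
      a ^ 2 * (x ⬝ᵥ (G.lapMatrix ℝ *ᵥ x)) := by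
  rw [← Matrix.toLinearMap₂'_apply', ← Matrix.toLinearMap₂'_apply',
    SimpleGraph.lapMatrix_toLinearMap₂', SimpleGraph.lapMatrix_toLinearMap₂', mul_div_assoc',
    Finset.mul_sum]
  congr 1
  refine Finset.sum_congr rfl fun i _ => ?_
  rw [Finset.mul_sum]
  refine Finset.sum_congr rfl fun j _ => ?_
  split_ifs
  · simp only [Pi.add_apply, Pi.smul_apply, smul_eq_mul]
    ring
  · rw [mul_zero]

theorem dotProduct_lapMatrix_mulVec_indicator [DecidableEq V] [DecidableRel G.Adj]
    {t : Finset V} (ht : ∀ v ∈ t, ∀ w ∈ t, ¬ G.Adj v w) :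
    (t : Set V).indicator 1 ⬝ᵥ (G.lapMatrix ℝ *ᵥ (t : Set V).indicator 1) =
      ∑ v ∈ t, (G.degree v : ℝ) := by
  have hcoord : ∀ v ∈ t, (G.lapMatrix ℝ *ᵥ (t : Set V).indicator 1) v = G.degree v := by
    intro v hv
    rw [SimpleGraph.lapMatrix_mulVec_apply, Finset.sum_eq_zero fun w hw =>
      Set.indicator_of_notMem (fun hwt => ht v hv w hwt ((G.mem_neighborFinset v w).1 hw)) _]
    simp [hv]
  simp only [dotProduct, Set.indicator_apply, Finset.mem_coe, Pi.one_apply, ite_mul, one_mul,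
    zero_mul, Finset.sum_ite_mem, Finset.univ_inter]
  exact Finset.sum_congr rfl hcoord

theorem minDeg_mul_card_le_lapMax_mul_card_sub [Nonempty V] {t : Finset V} (ht : ∀ v ∈ t, ∀ w ∈ t, ¬ G.Adj v w) :
    (minDeg G : ℝ) * Fintype.card V ≤ lapMax G * (Fintype.card V - t.card) := by
  classical
  rcases t.eq_empty_or_nonempty with rfl | htne
  · simp only [Finset.card_empty, Nat.cast_zero, sub_zero]
    gcongr
    exact (Nat.cast_le.2 (minDeg_le_maxDeg G)).trans (maxDeg_le_lapMax G)
  set n : ℝ := (Fintype.card V : ℝ)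
  set k : ℝ := (t.card : ℝ)
  set y : V → ℝ := (t : Set V).indicator 1
  set x : V → ℝ := n • y + fun _ => -k
  have hxLx : x ⬝ᵥ (G.lapMatrix ℝ *ᵥ x) = n ^ 2 * ∑ v ∈ t, (G.degree v : ℝ) := by
    rw [dotProduct_lapMatrix_mulVec_smul_add_const, dotProduct_lapMatrix_mulVec_indicator G ht]
  have hxx : x ⬝ᵥ x = n * k * (n - k) := by
    have hsq : ∀ v, x v * x v = (n ^ 2 - 2 * n * k) * y v + k ^ 2 := by
      intro v
      by_cases hv : v ∈ t <;>
        simp only [x, y, Pi.add_apply, Pi.smul_apply, smul_eq_mul, Set.indicator_apply,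
          Finset.mem_coe, hv, if_true, if_false, Pi.one_apply] <;> ring
    have hsum : ∑ v, y v = k := by simp [y, Set.indicator_apply, k]
    rw [dotProduct, Finset.sum_congr rfl fun v _ => hsq v, Finset.sum_add_distrib, ← Finset.mul_sum,
      hsum, Finset.sum_const, Finset.card_univ, nsmul_eq_mul]
    ring
  have hdeg : (minDeg G : ℝ) * k ≤ ∑ v ∈ t, (G.degree v : ℝ) := by
    rw [mul_comm, ← nsmul_eq_mul]
    exact Finset.card_nsmul_le_sum _ _ _ fun v _ => by
      exact_mod_cast (deg_eq_degree G v) ▸ minDeg_le_deg G v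
  have hrayleigh := dotProduct_lapMatrix_mulVec_le_lapMax_mul G x
  rw [hxLx, hxx] at hrayleigh
  have hn : 0 < n := by positivity
  have hk : 0 < k := by simpa [k] using htne.card_pos
  refine le_of_mul_le_mul_left ?_ (mul_pos hn hk)
  calc n * k * (minDeg G * n) = n ^ 2 * (minDeg G * k) := by ring
    _ ≤ n ^ 2 * ∑ v ∈ t, (G.degree v : ℝ) := by gcongr
    _ ≤ lapMax G * (n * k * (n - k)) := hrayleigh
    _ = n * k * (lapMax G * (n - k)) := by ring

end Laplacian

theorem exists_card_eq_indepNum {W : Type*} [Fintype W] (H : SimpleGraph W) :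
    ∃ s : Finset W, (∀ v ∈ s, ∀ w ∈ s, ¬ H.Adj v w) ∧ s.card = indepNum H := by
  refine Nat.sSup_mem (s := {n | ∃ s : Finset W, (∀ v ∈ s, ∀ w ∈ s, ¬ H.Adj v w) ∧ s.card = n})
    ⟨0, ∅, by simp, rfl⟩ ⟨Fintype.card W, ?_⟩
  rintro _ ⟨s, -, rfl⟩
  exact Finset.card_le_univ s

theorem exists_card_eq_indepNum_derived {V : Type*} [Fintype V] (G : SimpleGraph V) :
    ∃ t : Finset V, (∀ v ∈ t, ∀ w ∈ t, ¬ G.Adj v w) ∧ (∀ v ∈ t, deg G v < maxDeg G) ∧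
      t.card = indepNum (derived G) := by
  classical
  obtain ⟨s, hs, hcard⟩ := exists_card_eq_indepNum (derived G)
  refine ⟨s.map (Function.Embedding.subtype _), ?_, ?_, by rw [Finset.card_map, hcard]⟩
  · simp only [Finset.mem_map, Function.Embedding.coe_subtype]
    rintro _ ⟨v, hv, rfl⟩ _ ⟨w, hw, rfl⟩
    exact hs v hv w hw
  · simp only [Finset.mem_map, Function.Embedding.coe_subtype]
    rintro _ ⟨v, -, rfl⟩
    exact v.2

theorem strictMonoOn_relativeBound {n Δ δ α μ : ℝ} (hα : 0 ≤ α) (hαn : α < n) (hδ : 0 ≤ δ)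
    (hδΔ : δ ≤ Δ) (hΔ : 0 < Δ) (hΔμ : Δ ≤ μ) (hratio : δ * n ≤ μ * (n - α)) :
    StrictMonoOn (fun l : ℝ => n * (1 - Δ / l) + α * (Δ - δ) / (l - δ)) (Set.Ici μ) := by
  intro a ha b hb hab
  simp only [Set.mem_Ici] at ha hb
  have ha0 : 0 < a := by linarith
  have hb0 : 0 < b := by linarith
  rcases hδΔ.eq_or_lt with hΔδ | hδΔ
  · simp only [hΔδ, sub_self, mul_zero, zero_div, add_zero]
    gcongr
    linarith
  have haδ : 0 < a - δ := by linarith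
  have hbδ : 0 < b - δ := by linarith
  have hkey : α * (Δ - δ) * (a * b) < n * Δ * ((a - δ) * (b - δ)) := by
    have hP : 0 < (n - α) * b - n * δ := by nlinarith
    have hQ : 0 ≤ α * b * (δ * (a - Δ)) :=
      mul_nonneg (mul_nonneg hα hb0.le) (mul_nonneg hδ (by linarith))
    linear_combination mul_pos hP (mul_pos hΔ haδ) + hQ
  have hslopes : α * (Δ - δ) / ((a - δ) * (b - δ)) < n * Δ / (a * b) :=
    (div_lt_div_iff₀ (by positivity) (by positivity)).2 (by linarith)
  have hdiff : (n * (1 - Δ / b) + α * (Δ - δ) / (b - δ)) - (n * (1 - Δ / a) + α * (Δ - δ) / (a - δ))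
      = (b - a) * (n * Δ / (a * b) - α * (Δ - δ) / ((a - δ) * (b - δ))) := by
    field_simp
    ring
  have := mul_pos (sub_pos.2 hab) (sub_pos.2 hslopes)
  show _ < _
  linarith

/-- **Monotony** (Lemma 3): the spectral bounding function of the relative bound
is strictly increasing on `[λ_max, ∞)`. -/
theorem relative_bounding_function_strictMonoOn {V : Type*} [Fintype V] (G : SimpleGraph V)
    (hne : ∃ v w, G.Adj v w) :
    StrictMonoOn
      (fun lam : ℝ => (Fintype.card V : ℝ) * (1 - (maxDeg G : ℝ) / lam)
        + (indepNum (derived G) : ℝ) * ((maxDeg G : ℝ) - (minDeg G : ℝ)) / (lam - (minDeg G : ℝ)))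
      (Set.Ici (lapMax G)) := by
  obtain ⟨v, w, hvw⟩ := hne
  have : Nonempty V := ⟨v⟩
  obtain ⟨t, ht_indep, ht_deg, ht_card⟩ := exists_card_eq_indepNum_derived G
  obtain ⟨u, hu⟩ := exists_deg_eq_maxDeg G
  have hu_notMem : u ∉ t := fun hut => (ht_deg u hut).ne hu
  rw [← ht_card]
  refine strictMonoOn_relativeBound (by positivity) ?_ (by positivity)
    (by exact_mod_cast minDeg_le_maxDeg G) ?_ (maxDeg_le_lapMax G)
    (minDeg_mul_card_le_lapMax_mul_card_sub G ht_indep)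
  · exact_mod_cast Finset.card_lt_univ_of_notMem hu_notMem
  · exact_mod_cast (deg_pos_of_adj G hvw).trans_le (deg_le_maxDeg G v)
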